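/- For every continuously differentiable function u on [0,1] with u(0) = u(1) = 0 and u not identically zero, the Rayleigh quotient satisfies ∫₀¹ u'(x)² dx ≥ π² ∫₀¹ u(x)² dx (Poincaré/Wirtinger inequality), so the minimum of the Rayleigh quotient over such functions is π². -/

import Mathlib

/-!
The function `w x = π cot (π x) = φ' / φ`, for the ground state `φ x = sin (π x)`, solves the
Riccati equation `w' = -π² - w²`. For such a `w` one has the pointwise identity
`u'² - π² u² = (u' - w u)² + (w u²)'`, so on `[δ, 1 - δ]` the integral of `u'² - π² u²` is at
least the boundary term `[w u²]`. Since `u` is Lipschitz and vanishes at `0` and `1`, while `w` has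
only simple poles there, that boundary term is `O(δ)`; letting `δ → 0` gives the inequality.
Equality holds for `u = φ`, so `π²` is the minimum of the Rayleigh quotient.
-/

open Real Set Filter Topology MeasureTheory intervalIntegral

lemma hasDerivAt_div_of_hasDerivAt_eq_neg_mul {φ φ' : ℝ → ℝ} {l x : ℝ}
    (hφ : HasDerivAt φ (φ' x) x) (hφ' : HasDerivAt φ' (-l * φ x) x) (hx : φ x ≠ 0) :
    HasDerivAt (fun y => φ' y / φ y) (-l - (φ' x / φ x) ^ 2) x :=
  (hφ'.div hφ hx).congr_deriv (by field_simp)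

theorem sub_le_integral_deriv_sq_sub_of_riccati {u g w : ℝ → ℝ} {a b l : ℝ} (hab : a ≤ b)
    (hu : ∀ x ∈ Icc a b, HasDerivAt u (g x) x) (hg : ContinuousOn g (Icc a b))
    (hw : ∀ x ∈ Icc a b, HasDerivAt w (-l - w x ^ 2) x) :
    w b * u b ^ 2 - w a * u a ^ 2 ≤ ∫ x in a..b, (g x ^ 2 - l * u x ^ 2) := by
  have hu_cont : ContinuousOn u (Icc a b) := fun x hx =>
    (hu x hx).continuousAt.continuousWithinAt
  have hw_cont : ContinuousOn w (Icc a b) := fun x hx =>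
    (hw x hx).continuousAt.continuousWithinAt
  set D : ℝ → ℝ := fun x => (-l - w x ^ 2) * u x ^ 2 + w x * (2 * u x * g x)
  have hD : ∀ x ∈ uIcc a b, HasDerivAt (fun y => w y * u y ^ 2) (D x) x := fun x hx => by
    rw [uIcc_of_le hab] at hx
    exact ((hw x hx).mul ((hu x hx).pow 2)).congr_deriv
      (by simp only [D, Pi.pow_apply]; push_cast; ring)
  have hD_cont : ContinuousOn D (Icc a b) := by fun_prop
  have hE_cont : ContinuousOn (fun x => g x ^ 2 - l * u x ^ 2) (Icc a b) := by fun_prop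
  rw [← integral_eq_sub_of_hasDerivAt hD (hD_cont.intervalIntegrable_of_Icc hab)]
  refine integral_mono_on hab (hD_cont.intervalIntegrable_of_Icc hab)
    (hE_cont.intervalIntegrable_of_Icc hab) fun x _ => ?_
  -- `g² - l u² - (w u²)' = (g - w u)²` by the Riccati equation
  nlinarith [sq_nonneg (g x - w x * u x)]

theorem tendsto_integral_add_sub {f : ℝ → ℝ} {a b : ℝ} (hab : a < b)
    (hf : IntervalIntegrable f volume a b) :
    Tendsto (fun δ => ∫ x in (a + δ)..(b - δ), f x) (𝓝[>] 0) (𝓝 (∫ x in a..b, f x)) := by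
  set P : ℝ → ℝ := fun t => ∫ x in a..t, f x
  have hP : ContinuousOn P (Icc a b) := by
    simpa [uIcc_of_le hab.le] using continuousOn_primitive_interval' hf left_mem_uIcc
  have hmem : ∀ᶠ δ in 𝓝[>] (0:ℝ), a + δ ∈ Icc a b ∧ b - δ ∈ Icc a b := by
    filter_upwards [Ioo_mem_nhdsGT (sub_pos.2 hab)] with δ hδ
    exact ⟨⟨by linarith [hδ.1], by linarith [hδ.2]⟩, ⟨by linarith [hδ.2], by linarith [hδ.1]⟩⟩
  have hleft : Tendsto (fun δ => P (a + δ)) (𝓝[>] 0) (𝓝 (P a)) := by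
    refine (hP a (left_mem_Icc.2 hab.le)).tendsto.comp (tendsto_nhdsWithin_iff.2
      ⟨?_, hmem.mono fun _ h => h.1⟩)
    exact tendsto_nhdsWithin_of_tendsto_nhds (by simpa using (continuous_const_add a).tendsto 0)
  have hright : Tendsto (fun δ => P (b - δ)) (𝓝[>] 0) (𝓝 (P b)) := by
    refine (hP b (right_mem_Icc.2 hab.le)).tendsto.comp (tendsto_nhdsWithin_iff.2
      ⟨?_, hmem.mono fun _ h => h.2⟩)
    exact tendsto_nhdsWithin_of_tendsto_nhds (by simpa using (continuous_sub_left b).tendsto 0)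
  have hsplit : ∀ᶠ δ in 𝓝[>] (0:ℝ), P (b - δ) - P (a + δ) = ∫ x in (a + δ)..(b - δ), f x := by
    filter_upwards [hmem] with δ hδ
    rw [← uIcc_of_le hab.le] at hδ
    exact integral_interval_sub_left (hf.mono_set (uIcc_subset_uIcc left_mem_uIcc hδ.2))
      (hf.mono_set (uIcc_subset_uIcc left_mem_uIcc hδ.1))
  simpa [P] using (hright.sub hleft).congr' hsplit

theorem ContDiffOn.exists_abs_sub_le_mul_abs_sub {u : ℝ → ℝ} {a b : ℝ}
    (hu : ContDiffOn ℝ 1 u (Icc a b)) (hab : a < b) :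
    ∃ C, ∀ x ∈ Icc a b, ∀ y ∈ Icc a b, |u y - u x| ≤ C * |y - x| := by
  obtain ⟨C, hC⟩ := isCompact_Icc.exists_bound_of_continuousOn
    (hu.continuousOn_derivWithin (uniqueDiffOn_Icc hab) le_rfl)
  exact ⟨C, fun x hx y hy => (convex_Icc a b).norm_image_sub_le_of_norm_derivWithin_le
    (hu.differentiableOn one_ne_zero) hC hx hy⟩

lemma hasDerivAt_sin_pi_mul (x : ℝ) :
    HasDerivAt (fun y => sin (π * y)) (π * cos (π * x)) x := by
  simpa [mul_comm] using ((hasDerivAt_id x).const_mul π).sin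

lemma hasDerivAt_pi_mul_cos_pi_mul (x : ℝ) :
    HasDerivAt (fun y => π * cos (π * y)) (-π ^ 2 * sin (π * x)) x :=
  ((((hasDerivAt_id x).const_mul π).cos).const_mul π).congr_deriv (by simp only [id]; ring)

lemma sin_pi_mul_pos {x : ℝ} (hx : x ∈ Ioo 0 1) : 0 < sin (π * x) :=
  sin_pos_of_pos_of_lt_pi (mul_pos pi_pos hx.1) (by nlinarith [pi_pos, hx.2])

lemma hasDerivAt_pi_mul_cot_pi_mul {x : ℝ} (hx : sin (π * x) ≠ 0) :
    HasDerivAt (fun y => π * cot (π * y)) (-π ^ 2 - (π * cot (π * x)) ^ 2) x := by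
  simp only [cot_eq_cos_div_sin, mul_div_assoc']
  exact hasDerivAt_div_of_hasDerivAt_eq_neg_mul (hasDerivAt_sin_pi_mul x)
    (hasDerivAt_pi_mul_cos_pi_mul x) hx

lemma cot_pi_sub (t : ℝ) : cot (π - t) = -cot t := by
  simp [cot_eq_cos_div_sin, neg_div]

lemma cot_nonneg {t : ℝ} (h0 : 0 ≤ t) (h1 : t ≤ π / 2) : 0 ≤ cot t := by
  rw [cot_eq_cos_div_sin]
  exact div_nonneg (cos_nonneg_of_mem_Icc ⟨by linarith [pi_pos], h1⟩)
    (sin_nonneg_of_nonneg_of_le_pi h0 (by linarith [pi_pos]))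

lemma mul_cot_le_one {t : ℝ} (h0 : 0 < t) (h1 : t < π / 2) : t * cot t ≤ 1 := by
  have := lt_tan h0 h1
  rw [tan_eq_sin_div_cos, lt_div_iff₀ (cos_pos_of_mem_Ioo ⟨by linarith, h1⟩)] at this
  rw [cot_eq_cos_div_sin, mul_div_assoc',
    div_le_one (sin_pos_of_pos_of_lt_pi h0 (by linarith [pi_pos]))]
  linarith

lemma neg_le_pi_mul_cot_mul_sq_sub {a b C δ : ℝ} (hδ0 : 0 < δ) (hδ1 : δ < 1 / 2)
    (ha : |a| ≤ C * δ) (hb : |b| ≤ C * δ) :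
    -(2 * C ^ 2 * δ) ≤ π * cot (π * (1 - δ)) * b ^ 2 - π * cot (π * δ) * a ^ 2 := by
  rw [mul_sub, mul_one, cot_pi_sub]
  have hcot_nonneg : 0 ≤ π * cot (π * δ) :=
    mul_nonneg pi_pos.le (cot_nonneg (by positivity) (by nlinarith [pi_pos]))
  have hcot_le : δ * (π * cot (π * δ)) ≤ 1 := by
    simpa only [mul_left_comm δ, mul_assoc] using
      mul_cot_le_one (mul_pos pi_pos hδ0) (by nlinarith [pi_pos])
  have ha2 : a ^ 2 ≤ (C * δ) ^ 2 := sq_le_sq' (abs_le.1 ha).1 (abs_le.1 ha).2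
  have hb2 : b ^ 2 ≤ (C * δ) ^ 2 := sq_le_sq' (abs_le.1 hb).1 (abs_le.1 hb).2
  nlinarith [mul_le_mul_of_nonneg_left (add_le_add ha2 hb2) hcot_nonneg]

theorem pi_sq_mul_integral_sq_le_integral_derivWithin_sq {u : ℝ → ℝ}
    (hu : ContDiffOn ℝ 1 u (Icc 0 1)) (h0 : u 0 = 0) (h1 : u 1 = 0) :
    π ^ 2 * ∫ x in (0:ℝ)..1, u x ^ 2 ≤ ∫ x in (0:ℝ)..1, derivWithin u (Icc 0 1) x ^ 2 := by
  set g := derivWithin u (Icc 0 1)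
  have hu_cont := hu.continuousOn
  have hg : ContinuousOn g (Icc 0 1) :=
    hu.continuousOn_derivWithin (uniqueDiffOn_Icc one_pos) le_rfl
  have hderiv : ∀ x ∈ Ioo (0:ℝ) 1, HasDerivAt u (g x) x := fun x hx =>
    (hu.differentiableOn one_ne_zero x (Ioo_subset_Icc_self hx)).hasDerivWithinAt.hasDerivAt
      (Icc_mem_nhds hx.1 hx.2)
  obtain ⟨C, hC⟩ := hu.exists_abs_sub_le_mul_abs_sub one_pos
  have hbound : ∀ δ ∈ Ioo (0:ℝ) (1 / 2),
      -(2 * C ^ 2 * δ) ≤ ∫ x in (0 + δ)..(1 - δ), (g x ^ 2 - π ^ 2 * u x ^ 2) := by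
    rintro δ ⟨hδ0, hδ1⟩
    have hsub : Icc (0 + δ) (1 - δ) ⊆ Ioo 0 1 := fun x hx =>
      ⟨by linarith [hx.1], by linarith [hx.2]⟩
    have hu_left : |u δ| ≤ C * δ := by
      simpa [h0, abs_of_pos hδ0] using hC 0 ⟨le_rfl, zero_le_one⟩ δ ⟨hδ0.le, by linarith⟩
    have hu_right : |u (1 - δ)| ≤ C * δ := by
      simpa [h1, abs_of_pos hδ0] using
        hC (1 - δ) ⟨by linarith, by linarith⟩ 1 ⟨zero_le_one, le_rfl⟩
    refine (neg_le_pi_mul_cot_mul_sq_sub hδ0 hδ1 hu_left hu_right).trans ?_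
    simpa only [zero_add] using sub_le_integral_deriv_sq_sub_of_riccati (by linarith)
      (fun x hx => hderiv x (hsub hx)) (hg.mono (hsub.trans Ioo_subset_Icc_self))
      (fun x hx => hasDerivAt_pi_mul_cot_pi_mul (sin_pi_mul_pos (hsub hx)).ne')
  have hcont : ContinuousOn (fun x => g x ^ 2 - π ^ 2 * u x ^ 2) (Icc 0 1) := by fun_prop
  have hlim := tendsto_integral_add_sub one_pos (hcont.intervalIntegrable_of_Icc zero_le_one)
  have hnonneg : 0 ≤ ∫ x in (0:ℝ)..1, (g x ^ 2 - π ^ 2 * u x ^ 2) := by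
    have hlin : Tendsto (fun δ : ℝ => -(2 * C ^ 2 * δ)) (𝓝[>] 0) (𝓝 0) :=
      tendsto_nhdsWithin_of_tendsto_nhds
        ((by fun_prop : Continuous fun δ : ℝ => -(2 * C ^ 2 * δ)).tendsto' 0 0 (by simp))
    refine le_of_tendsto_of_tendsto hlin hlim ?_
    filter_upwards [Ioo_mem_nhdsGT (by norm_num : (0:ℝ) < 1 / 2)] with δ hδ using hbound δ hδ
  have hg_sq : ContinuousOn (fun x => g x ^ 2) (Icc 0 1) := by fun_prop
  have hu_sq : ContinuousOn (fun x => π ^ 2 * u x ^ 2) (Icc 0 1) := by fun_prop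
  rwa [integral_sub (hg_sq.intervalIntegrable_of_Icc zero_le_one)
    (hu_sq.intervalIntegrable_of_Icc zero_le_one), intervalIntegral.integral_const_mul,
    sub_nonneg] at hnonneg

lemma integral_sin_pi_mul_sq : ∫ x in (0:ℝ)..1, sin (π * x) ^ 2 = 1 / 2 := by
  rw [integral_comp_mul_left (fun x => sin x ^ 2) pi_ne_zero, integral_sin_sq]
  simp
  field_simp

lemma integral_cos_pi_mul_sq : ∫ x in (0:ℝ)..1, cos (π * x) ^ 2 = 1 / 2 := by
  rw [integral_comp_mul_left (fun x => cos x ^ 2) pi_ne_zero, integral_cos_sq]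
  simp
  field_simp

theorem integral_derivWithin_sin_pi_mul_sq_div :
    (∫ x in (0:ℝ)..1, derivWithin (fun y => sin (π * y)) (Icc 0 1) x ^ 2) /
      (∫ x in (0:ℝ)..1, sin (π * x) ^ 2) = π ^ 2 := by
  have hderiv : ∀ x ∈ uIcc (0:ℝ) 1,
      derivWithin (fun y => sin (π * y)) (Icc 0 1) x ^ 2 = π ^ 2 * cos (π * x) ^ 2 := by
    intro x hx
    rw [uIcc_of_le zero_le_one] at hx
    rw [(hasDerivAt_sin_pi_mul x).hasDerivWithinAt.derivWithin
      (uniqueDiffOn_Icc one_pos x hx), mul_pow]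
  rw [integral_congr hderiv, intervalIntegral.integral_const_mul, integral_cos_pi_mul_sq,
    integral_sin_pi_mul_sq]
  ring

theorem integral_sq_pos_of_exists_ne_zero {u : ℝ → ℝ} {a b : ℝ} (hab : a < b)
    (hu : ContinuousOn u (Icc a b)) (hne : ∃ x ∈ Icc a b, u x ≠ 0) :
    0 < ∫ x in a..b, u x ^ 2 := by
  obtain ⟨x, hx, hux⟩ := hne
  exact integral_pos hab (hu.pow 2) (fun _ _ => sq_nonneg _) ⟨x, hx, by positivity⟩

theorem poincare_wirtinger_and_min_rayleigh :
    (∀ u : ℝ → ℝ, ContDiffOn ℝ 1 u (Set.Icc 0 1) → u 0 = 0 → u 1 = 0 →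
      (¬ ∀ x ∈ Set.Icc (0:ℝ) 1, u x = 0) →
      π^2 * ∫ x in (0:ℝ)..1, (u x)^2 ≤ ∫ x in (0:ℝ)..1, (derivWithin u (Set.Icc 0 1) x)^2) ∧
    IsLeast {r : ℝ | ∃ u : ℝ → ℝ, ContDiffOn ℝ 1 u (Set.Icc 0 1) ∧ u 0 = 0 ∧ u 1 = 0 ∧
        (¬ ∀ x ∈ Set.Icc (0:ℝ) 1, u x = 0) ∧
        r = (∫ x in (0:ℝ)..1, (derivWithin u (Set.Icc 0 1) x)^2) /
              (∫ x in (0:ℝ)..1, (u x)^2)}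
      (π^2) := by
  refine ⟨fun u hu h0 h1 _ => pi_sq_mul_integral_sq_le_integral_derivWithin_sq hu h0 h1,
    ⟨fun x => sin (π * x), ?_, by simp, by simp, ?_, integral_derivWithin_sin_pi_mul_sq_div.symm⟩,
    ?_⟩
  · exact (contDiff_sin.comp (contDiff_const.mul contDiff_id)).contDiffOn
  · intro h
    have : sin (π * (1 / 2)) = 0 := h (1 / 2) ⟨by norm_num, by norm_num⟩
    rw [mul_one_div, sin_pi_div_two] at this
    exact one_ne_zero this
  · rintro r ⟨u, hu, h0, h1, hne, rfl⟩
    push Not at hne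
    rw [le_div_iff₀ (integral_sq_pos_of_exists_ne_zero one_pos hu.continuousOn hne)]
    exact pi_sq_mul_integral_sq_le_integral_derivWithin_sq hu h0 h1
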